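/- arXiv:1405.4535 — 7 statements merged into one kernel-verified Lean document; each statement's English description precedes it below -/
import Mathlib

section
/- Suppose that for all positive integers I and J, every set A of positive integers with |A| = H(I, J) contains I pairwise disjoint J-element subsets each of which is a Golomb ruler. Then for all integers I ≥ 1 and J ≥ 3 one has H(I+1, J) ≤ H(I, J) + J. (Theorem 2: Conjecture 1 implies Conjecture 2.) -/
/-- A finite set of naturals is a Golomb ruler if all differences of pairs of
distinct elements are distinct. -/
def IsGolomb (S : Finset ℕ) : Prop :=
  ∀ a ∈ S, ∀ b ∈ S, ∀ c ∈ S, ∀ d ∈ S, a ≠ b → c ≠ d →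
    (a : ℤ) - (b : ℤ) = (c : ℤ) - (d : ℤ) → a = c ∧ b = d

/-- `A` contains `I` pairwise disjoint `J`-element Golomb rulers. -/
def ContainsDGR (I J : ℕ) (A : Finset ℕ) : Prop :=
  ∃ f : Fin I → Finset ℕ,
    (∀ i, (f i).card = J ∧ f i ⊆ A ∧ IsGolomb (f i)) ∧
    ∀ i j, i ≠ j → Disjoint (f i) (f j)

/-- There is an `(I,J,n)`-DGR: `I` pairwise disjoint `J`-element Golomb rulers,
each a subset of `{1, 2, ..., n}`. -/
def HasDGR (I J n : ℕ) : Prop := ContainsDGR I J (Finset.Icc 1 n)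

/-- `H I J` is the least positive `n` such that an `(I,J,n)`-DGR exists. -/
noncomputable def H (I J : ℕ) : ℕ := sInf {n : ℕ | 0 < n ∧ HasDGR I J n}

/-
Proof idea: with `n = H I J`, Conjecture 1 applied to `{1, …, n}` yields a `J`-element
Golomb ruler `G ⊆ {1, …, n}`. The set `{1, …, n + J} \ G` again has exactly `n` elements,
so Conjecture 1 yields `I` disjoint rulers inside it; together with `G` these form an
`(I + 1, J, n + J)`-DGR.
-/

namespace ContainsDGR

variable {I J : ℕ} {A : Finset ℕ}

theorem exists_isGolomb (h : ContainsDGR I J A) (hI : 0 < I) :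
    ∃ G ⊆ A, G.card = J ∧ IsGolomb G := by
  obtain ⟨f, hf, -⟩ := h
  obtain ⟨hcard, hsub, hgolomb⟩ := hf ⟨0, hI⟩
  exact ⟨_, hsub, hcard, hgolomb⟩

theorem insert_ruler (h : ContainsDGR I J A) {G : Finset ℕ} (hcard : G.card = J)
    (hG : IsGolomb G) (hdisj : Disjoint A G) : ContainsDGR (I + 1) J (A ∪ G) := by
  obtain ⟨f, hf, hfd⟩ := h
  refine ⟨Fin.cons G f, fun i => ?_, fun i j hij => ?_⟩
  · cases i using Fin.cases with
    | zero => exact ⟨hcard, Finset.subset_union_right, hG⟩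
    | succ i =>
      obtain ⟨hcard, hsub, hgolomb⟩ := hf i
      exact ⟨hcard, hsub.trans Finset.subset_union_left, hgolomb⟩
  · cases i using Fin.cases with
    | zero =>
      cases j using Fin.cases with
      | zero => exact absurd rfl hij
      | succ j => exact (hdisj.mono_left (hf j).2.1).symm
    | succ i =>
      cases j using Fin.cases with
      | zero => exact hdisj.mono_left (hf i).2.1
      | succ j => exact hfd i j fun h => hij (congrArg Fin.succ h)

end ContainsDGR

theorem H_le_of_hasDGR {I J n : ℕ} (hn : 0 < n) (h : HasDGR I J n) : H I J ≤ n :=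
  Nat.sInf_le ⟨hn, h⟩

theorem card_Icc_add_sdiff {n J : ℕ} {G : Finset ℕ} (hG : G ⊆ Finset.Icc 1 (n + J))
    (hcard : G.card = J) : (Finset.Icc 1 (n + J) \ G).card = n := by
  rw [Finset.card_sdiff_of_subset hG, hcard, Nat.card_Icc]
  omega

theorem conj1_implies_conj2
    (hconj1 : ∀ I J : ℕ, 1 ≤ I → 1 ≤ J →
      ∀ A : Finset ℕ, (∀ a ∈ A, 0 < a) → A.card = H I J → ContainsDGR I J A) :
    ∀ I J : ℕ, 1 ≤ I → 3 ≤ J → H (I + 1) J ≤ H I J + J := by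
  intro I J hI hJ
  set n := H I J
  have pos_of_mem_Icc : ∀ m, ∀ a ∈ Finset.Icc 1 m, 0 < a := fun m a ha =>
    (Finset.mem_Icc.mp ha).1
  obtain ⟨G, hGn, hGcard, hG⟩ :=
    (hconj1 I J hI (by omega) (Finset.Icc 1 n) (pos_of_mem_Icc n) (by simp [n])).exists_isGolomb hI
  have hGsub : G ⊆ Finset.Icc 1 (n + J) := hGn.trans (Finset.Icc_subset_Icc_right (by omega))
  have hrest := hconj1 I J hI (by omega) (Finset.Icc 1 (n + J) \ G)
    (fun a ha => pos_of_mem_Icc _ a (Finset.mem_sdiff.mp ha).1) (card_Icc_add_sdiff hGsub hGcard)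
  have hdgr : HasDGR (I + 1) J (n + J) := by
    simpa [HasDGR, Finset.sdiff_union_of_subset hGsub] using
      hrest.insert_ruler hGcard hG Finset.sdiff_disjoint
  exact H_le_of_hasDGR (by omega) hdgr
end

section
/- Suppose that for all positive integers I and J, every set A of positive integers with |A| = H(I, J) contains I pairwise disjoint J-element subsets each of which is a Golomb ruler. Then for all positive integers I₀ ≥ 2 and J ≥ 3, if H(I₀, J) = I₀·J, then H(I, J) = I·J for every integer I > I₀. (Theorem 3: Conjecture 1 implies Conjecture 3.) -/
lemma hasDGR_lower {I J n : ℕ} (h : HasDGR I J n) : I * J ≤ n := by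
  obtain ⟨f, hf, hdisj⟩ := h
  have hcard : (Finset.univ.biUnion f).card = I * J := by
    rw [Finset.card_biUnion (fun i _ j _ hij => hdisj i j hij)]
    simp [(fun i => (hf i).1), Finset.sum_const, mul_comm]
  have hsub : Finset.univ.biUnion f ⊆ Finset.Icc 1 n :=
    Finset.biUnion_subset.mpr (fun i _ => (hf i).2.1)
  have := Finset.card_le_card hsub
  rwa [hcard, Nat.card_Icc, Nat.add_sub_cancel] at this

lemma step (hconj1 : ∀ I J : ℕ, 1 ≤ I → 1 ≤ J →
      ∀ A : Finset ℕ, (∀ a ∈ A, 0 < a) → A.card = H I J → ContainsDGR I J A)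
    {I J : ℕ} (hI : 1 ≤ I) (hJ : 1 ≤ J) (hH : H I J = I * J) :
    H (I + 1) J = (I + 1) * J := by
  have hIJpos : 0 < I * J := Nat.mul_pos hI hJ
  -- the defining set for H I J is nonempty, so H I J is a member
  have hne : {n : ℕ | 0 < n ∧ HasDGR I J n}.Nonempty := by
    by_contra h
    rw [Set.not_nonempty_iff_eq_empty] at h
    rw [H, h, Nat.sInf_empty] at hH
    omega
  have hmem := Nat.sInf_mem hne
  rw [show sInf {n : ℕ | 0 < n ∧ HasDGR I J n} = H I J from rfl, hH] at hmem
  obtain ⟨-, f, hf, hdisj⟩ := hmem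
  -- G : a Golomb ruler of size J inside Icc 1 (I*J)
  set G : Finset ℕ := f ⟨0, hI⟩ with hG
  have hGcard : G.card = J := (hf _).1
  have hGsub : G ⊆ Finset.Icc 1 ((I + 1) * J) :=
    (hf _).2.1.trans (Finset.Icc_subset_Icc_right (by nlinarith))
  have hGgolomb : IsGolomb G := (hf _).2.2
  -- A : the complement, of size I*J = H I J
  set A : Finset ℕ := Finset.Icc 1 ((I + 1) * J) \ G with hA
  have hApos : ∀ a ∈ A, 0 < a := fun a ha => by
    have := (Finset.mem_sdiff.mp ha).1
    have := (Finset.mem_Icc.mp this).1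
    omega
  have hAcard : A.card = H I J := by
    rw [hA, Finset.card_sdiff_of_subset hGsub, Nat.card_Icc, hGcard, hH]
    have : (I + 1) * J = I * J + J := by ring
    omega
  obtain ⟨g, hg, hgdisj⟩ := hconj1 I J hI hJ A hApos hAcard
  -- assemble I+1 rulers
  have hhas : HasDGR (I + 1) J ((I + 1) * J) := by
    refine ⟨fun i => if h : (i : ℕ) < I then g ⟨i, h⟩ else G, fun i => ?_, ?_⟩
    · by_cases h : (i : ℕ) < I
      · simp only [dif_pos h]
        refine ⟨(hg _).1, (hg _).2.1.trans ?_, (hg _).2.2⟩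
        exact Finset.sdiff_subset
      · simp only [dif_neg h]
        exact ⟨hGcard, hGsub, hGgolomb⟩
    · intro i j hij
      by_cases hi : (i : ℕ) < I <;> by_cases hj : (j : ℕ) < I
      · simp only [dif_pos hi, dif_pos hj]
        exact hgdisj _ _ (by simpa [Fin.ext_iff] using fun h => hij (Fin.ext h))
      · simp only [dif_pos hi, dif_neg hj]
        exact Finset.sdiff_disjoint.mono_left (hg _).2.1
      · simp only [dif_neg hi, dif_pos hj]
        exact (Finset.sdiff_disjoint.mono_left (hg _).2.1).symm
      · exact absurd (Fin.ext (by omega : (i : ℕ) = (j : ℕ))) hij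
  have hpos : 0 < (I + 1) * J := Nat.mul_pos (by omega) hJ
  have hle : H (I + 1) J ≤ (I + 1) * J := Nat.sInf_le ⟨hpos, hhas⟩
  have hne' : {n : ℕ | 0 < n ∧ HasDGR (I + 1) J n}.Nonempty := ⟨_, hpos, hhas⟩
  have hmem' := Nat.sInf_mem hne'
  have hge : (I + 1) * J ≤ H (I + 1) J := hasDGR_lower hmem'.2
  omega

theorem conj1_implies_conj3
    (hconj1 : ∀ I J : ℕ, 1 ≤ I → 1 ≤ J →
      ∀ A : Finset ℕ, (∀ a ∈ A, 0 < a) → A.card = H I J → ContainsDGR I J A) :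
    ∀ I₀ J : ℕ, 2 ≤ I₀ → 3 ≤ J → H I₀ J = I₀ * J →
      ∀ I : ℕ, I₀ < I → H I J = I * J := by
  intro I₀ J hI₀ hJ hbase I hI
  have key : ∀ I, I₀ ≤ I → H I J = I * J := by
    intro I hI
    induction I, hI using Nat.le_induction with
    | base => exact hbase
    | succ n hn ih => exact step hconj1 (by omega) (by omega) ih
  exact key I (le_of_lt hI)
end

section
/- If p is a prime power, then H(p+1, p) = p² + p; that is, there exist p+1 pairwise disjoint p-element Golomb rulers contained in {1, 2, ..., p²+p}, and p²+p is the least positive integer n for which p+1 pairwise disjoint p-element Golomb rulers contained in {1, ..., n} exist. (Theorem 4, first part.) -/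
/-! Singer's construction. Let `F = 𝔽_q` and let `K` be its cubic extension. The cosets of `Fˣ`
in the cyclic group `Kˣ` are the points of the projective plane over `F`; they form a cyclic group
of order `q² + q + 1`. The points of a line, i.e. of a plane `W ≤ K` through `1`, form a set `D` of
`q + 1` residues in which every difference occurs at most once: for `α ∉ F` the subspace
`W ∩ α⁻¹W` is at most one-dimensional, since `[K : F] = 3` is prime and so only the scalars of `F`
stabilise `W`. For `d ∈ D` the translates `(D \ {d}) - d`, read as integers in `{1, …, q² + q}`,
are `q + 1` disjoint `q`-mark Golomb rulers; and `p + 1` disjoint `p`-sets need `p² + p` points.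
-/

open Finset Module

section Sidon

variable {G G' : Type*} [AddCommGroup G] [AddCommGroup G']

def IsSidon (S : Set G) : Prop :=
  ∀ a ∈ S, ∀ b ∈ S, ∀ c ∈ S, ∀ d ∈ S, a ≠ b → a - b = c - d → a = c ∧ b = d

namespace IsSidon

variable {S T : Set G}

theorem mono (hS : IsSidon S) (hTS : T ⊆ S) : IsSidon T :=
  fun a ha b hb c hc d hd => hS a (hTS ha) b (hTS hb) c (hTS hc) d (hTS hd)

theorem image_sub_const (hS : IsSidon S) (t : G) : IsSidon ((· - t) '' S) := by
  rintro _ ⟨a, ha, rfl⟩ _ ⟨b, hb, rfl⟩ _ ⟨c, hc, rfl⟩ _ ⟨d, hd, rfl⟩ hab h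
  simp only [sub_sub_sub_cancel_right] at h
  obtain ⟨rfl, rfl⟩ := hS a ha b hb c hc d hd (fun h' => hab (by rw [h'])) h
  exact ⟨rfl, rfl⟩

theorem image_of_injective (hS : IsSidon S) {f : G →+ G'} (hf : Function.Injective f) :
    IsSidon (f '' S) := by
  rintro _ ⟨a, ha, rfl⟩ _ ⟨b, hb, rfl⟩ _ ⟨c, hc, rfl⟩ _ ⟨d, hd, rfl⟩ hab h
  rw [← map_sub, ← map_sub] at h
  obtain ⟨rfl, rfl⟩ := hS a ha b hb c hc d hd (fun h' => hab (by rw [h'])) (hf h)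
  exact ⟨rfl, rfl⟩

theorem exists_zmod [IsAddCyclic G] (hS : IsSidon S) {n : ℕ} (hn : Nat.card G = n) :
    ∃ D : Set (ZMod n), IsSidon D ∧ D.ncard = S.ncard := by
  subst hn
  let e := (zmodAddCyclicAddEquiv (inferInstance : IsAddCyclic G)).symm
  exact ⟨e '' S, hS.image_of_injective (f := e.toAddMonoidHom) e.injective,
    Set.ncard_image_of_injective S e.injective⟩

theorem isGolomb_image_val {n : ℕ} [NeZero n] {S : Finset (ZMod n)}
    (hS : IsSidon (S : Set (ZMod n))) : IsGolomb (S.image ZMod.val) := by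
  simp only [IsGolomb, mem_image, forall_exists_index, and_imp, forall_apply_eq_imp_iff₂]
  intro a ha b hb c hc d hd hab _ h
  have h' : a - b = c - d := by
    simpa only [Int.cast_sub, Int.cast_natCast, ZMod.natCast_zmod_val] using
      congrArg (Int.cast : ℤ → ZMod n) h
  obtain ⟨rfl, rfl⟩ := hS a ha b hb c hc d hd (fun h' => hab (by rw [h'])) h'
  exact ⟨rfl, rfl⟩

end IsSidon

end Sidon

theorem ContainsDGR.mul_le_card {I J : ℕ} {A : Finset ℕ} (h : ContainsDGR I J A) :
    I * J ≤ A.card := by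
  classical
  obtain ⟨f, hf, hdisj⟩ := h
  calc I * J = (univ.biUnion f).card := by
        rw [card_biUnion fun i _ j _ hij => hdisj i j hij]
        simp [fun i => (hf i).1]
    _ ≤ A.card := card_le_card (biUnion_subset.2 fun i _ => (hf i).2.1)

theorem hasDGR_of_isSidon {m k : ℕ} {D : Finset (ZMod (m + 1))}
    (hD : IsSidon (D : Set (ZMod (m + 1)))) (hcard : D.card = k + 1) : HasDGR (k + 1) k m := by
  classical
  let d : Fin (k + 1) → ZMod (m + 1) := fun i => (D.equivFinOfCardEq hcard).symm i
  have hdD : ∀ i, d i ∈ D := fun i => ((D.equivFinOfCardEq hcard).symm i).2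
  have hd_inj : Function.Injective d :=
    Subtype.val_injective.comp (D.equivFinOfCardEq hcard).symm.injective
  refine ⟨fun i => ((D.erase (d i)).image (· - d i)).image ZMod.val, fun i => ⟨?_, ?_, ?_⟩, ?_⟩
  · rw [card_image_of_injective _ (ZMod.val_injective _),
      card_image_of_injective _ (sub_left_injective), card_erase_of_mem (hdD i), hcard,
      Nat.add_sub_cancel]
  · simp only [subset_iff, mem_image, mem_erase, mem_Icc]
    rintro _ ⟨_, ⟨x, ⟨hx, -⟩, rfl⟩, rfl⟩
    exact ⟨ZMod.val_pos.2 (sub_ne_zero.2 hx), Nat.le_of_lt_succ (ZMod.val_lt _)⟩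
  · refine IsSidon.isGolomb_image_val ?_
    rw [coe_image]
    exact (hD.mono (coe_subset.2 (erase_subset _ _))).image_sub_const _
  · intro i j hij
    simp only [disjoint_left, mem_image, mem_erase]
    rintro _ ⟨_, ⟨x, ⟨hx, hxD⟩, rfl⟩, rfl⟩ ⟨_, ⟨y, ⟨-, hyD⟩, rfl⟩, h⟩
    have h' : x - d i = y - d j := ZMod.val_injective _ h.symm
    exact hij (hd_inj (hD x hxD (d i) (hdD i) y hyD (d j) (hdD j) hx h').2)

section Singer

open scoped IntermediateField

variable {F K : Type*} [Field F] [Field K] [Algebra F K]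

theorem mem_range_algebraMap_of_mul_mem [FiniteDimensional F K] (hK : (finrank F K).Prime)
    {W : Submodule F K} (hW1 : (1 : K) ∈ W) (hW : W ≠ ⊤) {α : K} (hα : ∀ v ∈ W, α * v ∈ W) :
    α ∈ Set.range (algebraMap F K) := by
  let M : Subalgebra F K :=
    { carrier := {β | ∀ v ∈ W, β * v ∈ W}
      mul_mem' := fun ha hb v hv => by rw [mul_assoc]; exact ha _ (hb v hv)
      add_mem' := fun ha hb v hv => by rw [add_mul]; exact W.add_mem (ha v hv) (hb v hv)
      algebraMap_mem' := fun c v hv => by rw [← Algebra.smul_def]; exact W.smul_mem c hv }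
  have hαM : F⟮α⟯.toSubalgebra ≤ M := by
    rw [IntermediateField.adjoin_simple_toSubalgebra_of_isAlgebraic
      (Algebra.IsAlgebraic.isAlgebraic α)]
    exact Algebra.adjoin_le (Set.singleton_subset_iff.2 hα)
  have hαW : Subalgebra.toSubmodule F⟮α⟯.toSubalgebra ≤ W := fun x hx => by
    simpa using hαM hx 1 hW1
  have hlt : finrank F F⟮α⟯ < finrank F K :=
    (Submodule.finrank_mono hαW).trans_lt (Submodule.finrank_lt hW)
  have hdvd : finrank F F⟮α⟯ ∣ finrank F K := ⟨_, (finrank_mul_finrank F F⟮α⟯ K).symm⟩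
  have h1 : finrank F F⟮α⟯ = 1 := (hK.eq_one_or_self_of_dvd _ hdvd).resolve_right hlt.ne
  rw [IntermediateField.finrank_eq_one_iff, IntermediateField.adjoin_simple_eq_bot_iff] at h1
  exact IntermediateField.mem_bot.1 h1

theorem exists_smul_eq_of_mul_mem (h3 : finrank F K = 3) {W : Submodule F K} (hW1 : (1 : K) ∈ W)
    (hW : finrank F W = 2) {α : K} (hα : α ∉ Set.range (algebraMap F K)) {u v : K}
    (hu : u ∈ W) (hu0 : u ≠ 0) (hαu : α * u ∈ W) (hv : v ∈ W) (hαv : α * v ∈ W) :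
    ∃ c : F, c • u = v := by
  have : FiniteDimensional F K := Module.finite_of_finrank_eq_succ h3
  set U := W ⊓ W.comap (LinearMap.mulLeft F α)
  have hUW : U < W := by
    refine inf_le_left.lt_of_ne fun hU => hα ?_
    refine mem_range_algebraMap_of_mul_mem (h3 ▸ Nat.prime_three) hW1 ?_ fun w hw => ?_
    · rintro rfl
      rw [finrank_top, h3] at hW
      omega
    · rw [← hU] at hw
      exact hw.2
  have hU : finrank F U ≤ 1 := by
    have := Submodule.finrank_lt_finrank_of_lt hUW
    omega
  have hspan : F ∙ u = U :=
    Submodule.eq_of_le_of_finrank_le (Submodule.span_singleton_le_iff_mem _ _ |>.2 ⟨hu, hαu⟩)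
      (by rwa [finrank_span_singleton hu0])
  exact Submodule.mem_span_singleton.1 (hspan ▸ (⟨hv, hαv⟩ : v ∈ U))

theorem exists_one_mem_finrank_eq_two (h : 1 < finrank F K) :
    ∃ W : Submodule F K, (1 : K) ∈ W ∧ finrank F W = 2 := by
  obtain ⟨y, hy⟩ := exists_linearIndependent_pair_of_one_lt_finrank h one_ne_zero
  exact ⟨Submodule.span F (Set.range ![1, y]), Submodule.subset_span ⟨0, rfl⟩,
    by rw [finrank_span_eq_card hy, Fintype.card_fin]⟩

variable (F K) in
/-- `Kˣ ⧸ baseUnits F K` is the set of points of the projective plane `ℙ_F(K)`. -/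
def baseUnits : Subgroup Kˣ := (Units.map (algebraMap F K : F →* K)).range

theorem mem_baseUnits_iff {u : Kˣ} :
    u ∈ baseUnits F K ↔ (u : K) ∈ Set.range (algebraMap F K) := by
  refine ⟨fun ⟨c, hc⟩ => ⟨c, by rw [← hc]; rfl⟩, fun ⟨c, hc⟩ => ?_⟩
  have hc0 : c ≠ 0 := by rintro rfl; exact u.ne_zero (by rw [← hc, map_zero])
  exact ⟨Units.mk0 c hc0, Units.ext hc⟩

theorem mk_eq_mk_iff {s t : Kˣ} :
    (s : Kˣ ⧸ baseUnits F K) = t ↔ ∃ c : F, c • (s : K) = t := by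
  rw [QuotientGroup.eq, mem_baseUnits_iff]
  simp only [Set.mem_range, Units.val_mul, Algebra.smul_def]
  refine exists_congr fun c => ?_
  rw [Units.val_inv_eq_inv_val, eq_inv_mul_iff_mul_eq₀ s.ne_zero, mul_comm]

theorem natCard_baseUnits : Nat.card (baseUnits F K) = Nat.card F - 1 := by
  rw [baseUnits, ← Nat.card_congr (MonoidHom.ofInjective (f := Units.map (algebraMap F K : F →* K))
    (Units.map_injective (algebraMap F K).injective)).toEquiv, Nat.card_units]

theorem card_quotient_baseUnits [Finite K] (h3 : finrank F K = 3) :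
    Nat.card (Kˣ ⧸ baseUnits F K) = Nat.card F ^ 2 + Nat.card F + 1 := by
  have : Finite F := Finite.of_injective _ (algebraMap F K).injective
  have : Module.Finite F K := Module.Finite.of_finite
  obtain ⟨q, hq⟩ : ∃ q, Nat.card F = q + 1 := ⟨_, (Nat.succ_pred_eq_of_pos Nat.card_pos).symm⟩
  have hq0 : 0 < q := by have : 1 < Nat.card F := Finite.one_lt_card; omega
  have := Subgroup.card_eq_card_quotient_mul_card_subgroup (baseUnits F K)
  rw [natCard_baseUnits, Nat.card_units, Module.natCard_eq_pow_finrank (K := F), h3, hq,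
    Nat.add_sub_cancel] at this
  rw [hq]
  refine Nat.eq_of_mul_eq_mul_right hq0 (this.symm.trans ?_)
  ring_nf
  omega

theorem ncard_setOf_val_mem [Finite K] (W : Submodule F K) :
    {u : Kˣ | (u : K) ∈ W}.ncard = Nat.card W - 1 := by
  have himage : Units.val '' {u : Kˣ | (u : K) ∈ W} = (W : Set K) \ {0} := by
    ext x
    refine ⟨?_, fun ⟨hx, hx0⟩ => ⟨Units.mk0 x hx0, hx, rfl⟩⟩
    rintro ⟨u, hu, rfl⟩
    exact ⟨hu, u.ne_zero⟩
  rw [← Set.ncard_image_of_injective _ Units.val_injective, himage,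
    Set.ncard_sdiff_singleton_of_mem W.zero_mem, ← Nat.card_coe_set_eq, SetLike.coe_sort_coe]

variable (F) in
def singerSet (W : Submodule F K) : Set (Additive (Kˣ ⧸ baseUnits F K)) :=
  (fun u : Kˣ => Additive.ofMul (u : Kˣ ⧸ baseUnits F K)) '' {u | (u : K) ∈ W}

theorem isSidon_singerSet (h3 : finrank F K = 3) {W : Submodule F K} (hW1 : (1 : K) ∈ W)
    (hW : finrank F W = 2) : IsSidon (singerSet F W) := by
  rintro _ ⟨u, hu, rfl⟩ _ ⟨v, hv, rfl⟩ _ ⟨u', hu', rfl⟩ _ ⟨v', hv', rfl⟩ huv h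
  simp only [← ofMul_div, ne_eq, EmbeddingLike.apply_eq_iff_eq] at h huv ⊢
  obtain ⟨c, hc⟩ := (mk_eq_mk_iff (s := u' / v') (t := u / v)).1
    (by simpa only [QuotientGroup.mk_div] using h.symm)
  have hα : (u / v : K) ∉ Set.range (algebraMap F K) := by
    rintro ⟨a, ha⟩
    refine huv (mk_eq_mk_iff.2 ⟨a, ?_⟩).symm
    rw [Algebra.smul_def, ha, div_mul_cancel₀ _ v.ne_zero]
  have hαv' : (u / v : K) * v' = c • (u' : K) := by
    rw [← Units.val_div_eq_div_val, ← hc, Units.val_div_eq_div_val, smul_mul_assoc,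
      div_mul_cancel₀ _ v'.ne_zero]
  obtain ⟨a, ha⟩ := exists_smul_eq_of_mul_mem h3 hW1 hW hα hv v.ne_zero
    (by rwa [div_mul_cancel₀ _ v.ne_zero]) hv' (hαv' ▸ W.smul_mem c hu')
  have hvv' : (v : Kˣ ⧸ baseUnits F K) = v' := mk_eq_mk_iff.2 ⟨a, ha⟩
  rw [hvv', div_left_inj] at h
  exact ⟨h, hvv'⟩

theorem ncard_singerSet [Finite K] {W : Submodule F K} (hW : finrank F W = 2) :
    (singerSet F W).ncard = Nat.card F + 1 := by
  have : Finite F := Finite.of_injective _ (algebraMap F K).injective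
  have hpre : QuotientGroup.mk ⁻¹' (singerSet F W : Set (Kˣ ⧸ baseUnits F K)) =
      {u : Kˣ | (u : K) ∈ W} := by
    ext u
    refine ⟨fun ⟨v, hv, hvu⟩ => ?_, fun hu => ⟨u, hu, rfl⟩⟩
    obtain ⟨c, hc⟩ := mk_eq_mk_iff.1 hvu
    change (u : K) ∈ W
    rw [← hc]
    exact W.smul_mem c hv
  have := QuotientGroup.card_preimage_mk (baseUnits F K) (singerSet F W)
  rw [hpre, Nat.card_coe_set_eq, ncard_setOf_val_mem, Module.natCard_eq_pow_finrank (K := F), hW,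
    natCard_baseUnits] at this
  rw [← Nat.card_coe_set_eq]
  obtain ⟨q, hq⟩ : ∃ q, Nat.card F = q + 1 := ⟨_, (Nat.succ_pred_eq_of_pos Nat.card_pos).symm⟩
  have hq0 : 0 < q := by have : 1 < Nat.card F := Finite.one_lt_card; omega
  rw [hq, Nat.add_sub_cancel] at this
  rw [hq]
  refine Nat.eq_of_mul_eq_mul_left hq0 (this.symm.trans ?_)
  ring_nf
  omega

theorem exists_isSidon_zmod_of_finrank_eq_three [Finite K] (h3 : finrank F K = 3) :
    ∃ D : Set (ZMod (Nat.card F ^ 2 + Nat.card F + 1)), IsSidon D ∧ D.ncard = Nat.card F + 1 := by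
  obtain ⟨W, hW1, hW⟩ := exists_one_mem_finrank_eq_two (F := F) (K := K) (by omega)
  obtain ⟨D, hD, hcard⟩ := (isSidon_singerSet h3 hW1 hW).exists_zmod (card_quotient_baseUnits h3)
  exact ⟨D, hD, hcard.trans (ncard_singerSet hW)⟩

end Singer

theorem exists_isSidon_zmod_of_isPrimePow {q : ℕ} (hq : IsPrimePow q) :
    ∃ D : Set (ZMod (q ^ 2 + q + 1)), IsSidon D ∧ D.ncard = q + 1 := by
  obtain ⟨r, e, hr, he, rfl⟩ := hq
  have : Fact r.Prime := ⟨hr.nat_prime⟩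
  have hF : Nat.card (GaloisField r e) = r ^ e := GaloisField.card r e he.ne'
  have := exists_isSidon_zmod_of_finrank_eq_three
    (FiniteField.finrank_extension (GaloisField r e) r 3)
  rwa [hF] at this

theorem H_primePow_succ (p : ℕ) (hp : IsPrimePow p) :
    H (p + 1) p = p ^ 2 + p := by
  obtain ⟨D, hD, hcard⟩ := exists_isSidon_zmod_of_isPrimePow hp
  obtain ⟨D, rfl⟩ := D.toFinite.exists_finset_coe
  have hDGR : HasDGR (p + 1) p (p ^ 2 + p) :=
    hasDGR_of_isSidon hD (by rwa [Set.ncard_coe_finset] at hcard)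
  have hmem : p ^ 2 + p ∈ {n | 0 < n ∧ HasDGR (p + 1) p n} := ⟨Nat.add_pos_right _ hp.pos, hDGR⟩
  refine le_antisymm (Nat.sInf_le hmem) (le_csInf ⟨_, hmem⟩ ?_)
  rintro n ⟨-, hn⟩
  have := ContainsDGR.mul_le_card hn
  rw [Nat.card_Icc, Nat.add_sub_cancel] at this
  linarith
end

section
/- If p is a prime power with p ≥ 2, then H(p, p−1) ≤ p² − 2; that is, there exist p pairwise disjoint (p−1)-element Golomb rulers contained in {1, 2, ..., p²−2}. (Theorem 4, second part.) -/
/-! Bose's construction. Let `F = 𝔽_q ⊂ K = 𝔽_{q²}` and `θ ∈ K \ F`. Every affine `F`-line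
`{x + t y}` of `K` missing `0` is a multiplicative Sidon set: a coincidence
`(x + t₁y)(x + t₄y) = (x + t₂y)(x + t₃y)` forces `t₁ + t₄ = t₂ + t₃` and `t₁t₄ = t₂t₃`, by the
independence of `x` and `y`. The `q` lines through `1` with directions `θ + d`, `d ∈ F`, punctured
at `1`, are pairwise disjoint, avoid `0` and `1`, and have `q - 1` points each. Discrete logarithms
with respect to a generator of `Kˣ` turn them into disjoint Golomb rulers in `{1, …, q² - 2}`. -/

open Finset Function

def IsMulSidon {M : Type*} [Mul M] (A : Set M) : Prop :=
  ∀ a ∈ A, ∀ b ∈ A, ∀ c ∈ A, ∀ d ∈ A, a * d = b * c → a ≠ b → a = c ∧ b = d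

theorem IsMulSidon.mono {M : Type*} [Mul M] {A B : Set M} (hB : IsMulSidon B) (hAB : A ⊆ B) :
    IsMulSidon A := fun a ha b hb c hc d hd =>
  hB a (hAB ha) b (hAB hb) c (hAB hc) d (hAB hd)

section DiscreteLog

variable {M : Type*} [Monoid M] [DecidableEq M] {g : M} {A : Finset M}

theorem card_filter_pow_mem_Icc (hg : IsOfFinOrder g)
    (hA : ∀ a ∈ A, a ∈ Submonoid.powers g ∧ a ≠ 1) :
    #{m ∈ Icc 1 (orderOf g - 1) | g ^ m ∈ A} = #A := by
  refine card_nbij (g ^ ·) (fun m hm => (mem_filter.1 hm).2) ?_ ?_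
  · intro m hm n hn hmn
    simp only [coe_filter, mem_Icc, Set.mem_ofPred_eq] at hm hn
    exact pow_injOn_Iio_orderOf (by simp; omega) (by simp; omega) hmn
  · intro a ha
    obtain ⟨hpow, ha1⟩ := hA a ha
    obtain ⟨m, hm, rfl⟩ := mem_image.1 ((hg.mem_powers_iff_mem_range_orderOf).1 hpow)
    have hm0 : m ≠ 0 := by rintro rfl; exact ha1 (pow_zero g)
    refine ⟨m, ?_, rfl⟩
    simp only [coe_filter, mem_Icc, Set.mem_ofPred_eq, mem_range] at hm ⊢
    exact ⟨⟨by omega, by omega⟩, ha⟩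

theorem IsMulSidon.isGolomb_filter_pow_mem_Icc (hA : IsMulSidon (A : Set M)) :
    IsGolomb {m ∈ Icc 1 (orderOf g - 1) | g ^ m ∈ A} := by
  intro a ha b hb c hc d hd hab _ hdiff
  simp only [mem_filter, mem_Icc] at ha hb hc hd
  have hmul : g ^ a * g ^ d = g ^ b * g ^ c := by
    rw [← pow_add, ← pow_add, show a + d = b + c by omega]
  have hpow_inj : ∀ {m n}, 1 ≤ m ∧ m ≤ orderOf g - 1 → 1 ≤ n ∧ n ≤ orderOf g - 1 →
      g ^ m = g ^ n → m = n := fun hm hn h =>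
    pow_injOn_Iio_orderOf (by simp; omega) (by simp; omega) h
  obtain ⟨hac, hbd⟩ := hA _ ha.2 _ hb.2 _ hc.2 _ hd.2 hmul (fun h => hab (hpow_inj ha.1 hb.1 h))
  exact ⟨hpow_inj ha.1 hc.1 hac, hpow_inj hb.1 hd.1 hbd⟩

theorem containsDGR_of_isMulSidon (hg : IsOfFinOrder g) {I J : ℕ} (A : Fin I → Finset M)
    (hcard : ∀ i, #(A i) = J) (hsidon : ∀ i, IsMulSidon (A i : Set M))
    (hpow : ∀ i, ∀ a ∈ A i, a ∈ Submonoid.powers g ∧ a ≠ 1)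
    (hdisj : Pairwise (Disjoint on A)) :
    ContainsDGR I J (Icc 1 (orderOf g - 1)) := by
  refine ⟨fun i => {m ∈ Icc 1 (orderOf g - 1) | g ^ m ∈ A i}, fun i => ?_,
    fun i j hij => ?_⟩
  · exact ⟨(card_filter_pow_mem_Icc hg (hpow i)).trans (hcard i), filter_subset _ _,
      (hsidon i).isGolomb_filter_pow_mem_Icc⟩
  · exact disjoint_filter.2 fun m _ hi hj => disjoint_left.1 (hdisj hij) hi hj

end DiscreteLog

theorem FiniteField.exists_orderOf_eq_forall_mem_powers (K : Type*) [Field K] [Finite K] :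
    ∃ g : K, orderOf g = Nat.card K - 1 ∧ ∀ x : K, x ≠ 0 → x ∈ Submonoid.powers g := by
  obtain ⟨γ, hγ⟩ := IsCyclic.exists_generator (α := Kˣ)
  refine ⟨γ, ?_, fun x hx => ?_⟩
  · rw [orderOf_units, orderOf_eq_card_of_forall_mem_zpowers hγ, Nat.card_units]
  · obtain ⟨n, hn⟩ := mem_powers_iff_mem_zpowers.2 (hγ (Units.mk0 x hx))
    exact ⟨n, by simp [← Units.val_pow_eq_pow_val, hn]⟩

section Lines

variable {F K : Type*} [Field F] [Field K] [Algebra F K] {x y : K}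

theorem isMulSidon_range_add_smul (h : LinearIndependent F ![x, y]) :
    IsMulSidon (Set.range fun t : F => x + t • y) := by
  rintro _ ⟨t₁, rfl⟩ _ ⟨t₂, rfl⟩ _ ⟨t₃, rfl⟩ _ ⟨t₄, rfl⟩ hmul hne
  have hy : y ≠ 0 := h.ne_zero 1
  have hcomb : (t₁ + t₄ - t₂ - t₃) • x + (t₁ * t₄ - t₂ * t₃) • y = 0 := by
    refine mul_left_cancel₀ hy ?_
    simp only [Algebra.smul_def, map_sub, map_add, map_mul] at hmul ⊢
    linear_combination hmul
  obtain ⟨hsum, hprod⟩ := LinearIndependent.pair_iff.1 h _ _ hcomb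
  have ht₂ : t₁ ≠ t₂ := fun ht => hne (by rw [ht])
  have ht₃ : t₁ = t₃ := by
    have : (t₁ - t₂) * (t₁ - t₃) = 0 := by linear_combination t₁ * hsum - hprod
    exact sub_eq_zero.1 ((mul_eq_zero.1 this).resolve_left (sub_ne_zero.2 ht₂))
  have ht₄ : t₂ = t₄ := by linear_combination ht₃ - hsum
  exact ⟨by rw [ht₃], by rw [ht₄]⟩

variable (F) [Fintype F] [DecidableEq F] [DecidableEq K]

def puncturedLine (x y : K) : Finset K := (univ.erase (0 : F)).image fun t => x + t • y

variable {F}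

theorem card_puncturedLine (hy : y ≠ 0) : #(puncturedLine F x y) = Fintype.card F - 1 := by
  rw [puncturedLine,
    card_image_of_injective _ fun t t' h => smul_left_injective F hy (add_left_cancel h),
    card_erase_of_mem (mem_univ _), card_univ]

theorem isMulSidon_puncturedLine (h : LinearIndependent F ![x, y]) :
    IsMulSidon (puncturedLine F x y : Set K) :=
  (isMulSidon_range_add_smul h).mono (by simp [puncturedLine])

theorem zero_notMem_puncturedLine (h : LinearIndependent F ![x, y]) :
    0 ∉ puncturedLine F x y := by
  simp only [puncturedLine, mem_image, mem_erase, mem_univ, and_true, not_exists, not_and]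
  intro t _ ht
  simpa using (LinearIndependent.pair_iff.1 h 1 t (by rw [one_smul, ht])).1

theorem self_notMem_puncturedLine (hy : y ≠ 0) : x ∉ puncturedLine F x y := by
  simp [puncturedLine, hy]

theorem disjoint_puncturedLine {y' : K} (h : LinearIndependent F ![y, y']) :
    Disjoint (puncturedLine F x y) (puncturedLine F x y') := by
  simp only [puncturedLine, disjoint_left, mem_image, mem_erase, mem_univ, and_true, not_exists,
    not_and]
  rintro _ ⟨t, ht, rfl⟩ t' _ heq
  exact ht (LinearIndependent.pair_iff.1 h t (-t') (by rw [neg_smul]; linear_combination -heq)).1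

end Lines

section NotMemRange

variable {F K : Type*} [Field F] [Field K] [Algebra F K] {θ : K}

theorem eq_zero_of_smul_add_algebraMap_eq_zero (hθ : θ ∉ Set.range (algebraMap F K)) {s t : F}
    (h : s • θ + algebraMap F K t = 0) : s = 0 ∧ t = 0 := by
  have hs : s = 0 := by
    by_contra hs
    refine hθ ⟨-t / s, ?_⟩
    rw [Algebra.smul_def] at h
    rw [map_div₀, map_neg, div_eq_iff ((map_ne_zero _).2 hs)]
    linear_combination -h
  subst hs
  simpa using h

theorem linearIndependent_one_add_algebraMap (hθ : θ ∉ Set.range (algebraMap F K)) (d : F) :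
    LinearIndependent F ![1, θ + algebraMap F K d] := by
  refine LinearIndependent.pair_iff.2 fun s t h => ?_
  obtain ⟨ht, hstd⟩ := eq_zero_of_smul_add_algebraMap_eq_zero hθ (s := t) (t := s + t * d) (by
    simp only [Algebra.smul_def, map_add, map_mul, mul_one] at h ⊢
    linear_combination h)
  subst ht
  simpa using hstd

theorem linearIndependent_add_algebraMap_add_algebraMap (hθ : θ ∉ Set.range (algebraMap F K))
    {d d' : F} (hd : d ≠ d') :
    LinearIndependent F ![θ + algebraMap F K d, θ + algebraMap F K d'] := by
  refine LinearIndependent.pair_iff.2 fun s t h => ?_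
  obtain ⟨hst, hstd⟩ := eq_zero_of_smul_add_algebraMap_eq_zero hθ (s := s + t)
    (t := s * d + t * d') (by
      simp only [Algebra.smul_def, map_add, map_mul] at h ⊢
      linear_combination h)
  have hsd : s * (d - d') = 0 := by linear_combination hstd - d' * hst
  have hs : s = 0 := (mul_eq_zero.1 hsd).resolve_right (sub_ne_zero.2 hd)
  exact ⟨hs, by linear_combination hst - hs⟩

end NotMemRange

theorem containsDGR_of_natCard_lt {F K : Type*} [Field F] [Finite F] [Field K] [Finite K]
    [Algebra F K] (hFK : Nat.card F < Nat.card K) :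
    ContainsDGR (Nat.card F) (Nat.card F - 1) (Icc 1 (Nat.card K - 2)) := by
  classical
  have := Fintype.ofFinite F
  obtain ⟨θ, hθ⟩ : ∃ θ : K, θ ∉ Set.range (algebraMap F K) := by
    by_contra! h
    exact hFK.not_ge (Nat.card_le_card_of_surjective _ fun θ => h θ)
  obtain ⟨g, hg, hpow⟩ := FiniteField.exists_orderOf_eq_forall_mem_powers K
  have hg₀ : 0 < orderOf g := by have : 1 < Nat.card K := Finite.one_lt_card; omega
  have hind d := linearIndependent_one_add_algebraMap hθ d
  have hy d : θ + algebraMap F K d ≠ 0 := (hind d).ne_zero 1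
  let e := (Finite.equivFin F).symm
  have := containsDGR_of_isMulSidon (orderOf_pos_iff.1 hg₀) (J := Nat.card F - 1)
    (fun i => puncturedLine F 1 (θ + algebraMap F K (e i)))
    (fun i => by rw [card_puncturedLine (hy _), Nat.card_eq_fintype_card])
    (fun i => isMulSidon_puncturedLine (hind _))
    (fun i a ha => ⟨hpow a (ne_of_mem_of_not_mem ha (zero_notMem_puncturedLine (hind _))),
      ne_of_mem_of_not_mem ha (self_notMem_puncturedLine (hy _))⟩)
    (fun i j hij => disjoint_puncturedLine
      (linearIndependent_add_algebraMap_add_algebraMap hθ (e.injective.ne hij)))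
  rwa [show orderOf g - 1 = Nat.card K - 2 by omega] at this

theorem H_primePow_pred_marks_general (p : ℕ) (hp : IsPrimePow p) :
    H p (p - 1) ≤ p ^ 2 - 2 := by
  obtain ⟨r, k, hr, hk, hrk⟩ := (isPrimePow_nat_iff _).1 hp
  have : Fact r.Prime := ⟨hr⟩
  let F := GaloisField r k
  let K := FiniteField.Extension F r 2
  have hF : Nat.card F = p := hrk ▸ GaloisField.card r k hk.ne'
  have hK : Nat.card K = p ^ 2 := by rw [FiniteField.natCard_extension, hF]
  have hp₄ : 4 ≤ p ^ 2 := by nlinarith [hp.two_le]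
  have hdgr := containsDGR_of_natCard_lt (F := F) (K := K) (by rw [hF, hK]; nlinarith)
  rw [hF, hK] at hdgr
  exact Nat.sInf_le ⟨by omega, hdgr⟩

theorem H_primePow_pred_marks (p : ℕ) (hp : IsPrimePow p) (h2 : 2 ≤ p) :
    H p (p - 1) ≤ p ^ 2 - 2 :=
  H_primePow_pred_marks_general p hp
end

section
/- Let I ≥ 1, J ≥ 1 and n be positive integers. If every set of n positive integers contains I pairwise disjoint J-element subsets each of which is a Golomb ruler, then every set of n + J positive integers contains I + 1 pairwise disjoint J-element subsets each of which is a Golomb ruler. (This is the inequality Y(I+1, J) ≤ Y(I, J) + J, where Y(I, J) is the smallest n such that any set of n positive integers contains I disjoint J-mark Golomb rulers.) -/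
theorem Y_succ_le (I J n : ℕ) (hI : 1 ≤ I) (hJ : 1 ≤ J) (hn : 1 ≤ n)
    (h : ∀ A : Finset ℕ, (∀ a ∈ A, 0 < a) → A.card = n → ContainsDGR I J A) :
    ∀ A : Finset ℕ, (∀ a ∈ A, 0 < a) → A.card = n + J → ContainsDGR (I + 1) J A := by
  intro A hpos hcard
  -- pick an n-element subset B of A
  obtain ⟨B, hBA, hBcard⟩ := Finset.exists_subset_card_eq (le_of_le_of_eq (Nat.le_add_right n J) hcard.symm)
  obtain ⟨f, hf, _⟩ := h B (fun a ha => hpos a (hBA ha)) hBcard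
  set G := f ⟨0, hI⟩ with hG
  obtain ⟨hGcard, hGB, hGgol⟩ := hf ⟨0, hI⟩
  have hGA : G ⊆ A := hGB.trans hBA
  have hA' : (A \ G).card = n := by
    rw [Finset.card_sdiff_of_subset hGA, hcard, hGcard]; omega
  obtain ⟨g, hg, hgdisj⟩ := h (A \ G) (fun a ha => hpos a (Finset.mem_sdiff.mp ha).1) hA'
  refine ⟨Fin.snoc g G, ?_, ?_⟩
  · intro i
    refine Fin.lastCases ?_ ?_ i
    · simpa [Fin.snoc_last] using ⟨hGcard, hGA, hGgol⟩
    · intro k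
      obtain ⟨h1, h2, h3⟩ := hg k
      simpa [Fin.snoc_castSucc] using ⟨h1, h2.trans (Finset.sdiff_subset), h3⟩
  · intro i j
    have key : ∀ k : Fin I, Disjoint (g k) G := fun k =>
      Finset.disjoint_of_subset_left (hg k).2.1 Finset.sdiff_disjoint
    refine Fin.lastCases ?_ (fun k => ?_) i <;> refine Fin.lastCases ?_ (fun l => ?_) j <;>
      intro hij <;> simp only [Fin.snoc_last, Fin.snoc_castSucc]
    · exact absurd rfl hij
    · exact (key l).symm
    · exact key k
    · exact hgdisj k l (fun e => hij (by rw [e]))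
end

section
/- Let k ≥ 2 be an integer. If H(k, k+2) = k(k+2), i.e., there exist k pairwise disjoint (k+2)-element Golomb rulers contained in {1, 2, ..., k(k+2)}, then G(k+2) ≤ k² + k; that is, there exists a (k+2)-mark Golomb ruler of length at most k² + k. (The deduction of the bound on optimal Golomb ruler lengths from Conjecture 5.) -/
theorem golomb_length_bound_of_regular_DGR (k : ℕ) (hk : 2 ≤ k)
    (h : HasDGR k (k + 2) (k * (k + 2))) :
    ∃ S : Finset ℕ, IsGolomb S ∧ S.card = k + 2 ∧
      ∃ hS : S.Nonempty, S.max' hS - S.min' hS ≤ k ^ 2 + k := by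
  obtain ⟨f, hf, hdisj⟩ := h
  have hne : ∀ i : Fin k, (f i).Nonempty := fun i =>
    Finset.card_pos.mp (by rw [(hf i).1]; omega)
  by_contra hcon
  push_neg at hcon
  -- every ruler has length > k^2 + k, hence its min is ≤ k - 1
  have hmin : ∀ i : Fin k, (f i).min' (hne i) ∈ Finset.Icc 1 (k - 1) := by
    intro i
    have hlen := hcon (f i) (hf i).2.2 (hf i).1 (hne i)
    have hmax := (Finset.mem_Icc.mp ((hf i).2.1 (Finset.max'_mem _ (hne i)))).2
    have hmin1 := (Finset.mem_Icc.mp ((hf i).2.1 (Finset.min'_mem _ (hne i)))).1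
    have hle : (f i).min' (hne i) ≤ (f i).max' (hne i) := Finset.min'_le _ _ (Finset.max'_mem _ (hne i))
    rw [Finset.mem_Icc]
    constructor
    · exact hmin1
    · have hk2 : k * (k + 2) = k ^ 2 + 2 * k := by ring
      omega
  have hinj : Function.Injective (fun i : Fin k => (f i).min' (hne i)) := by
    intro i j hij
    by_contra hne'
    have := hdisj i j hne'
    have h2 : (f i).min' (hne i) = (f j).min' (hne j) := hij
    exact (Finset.disjoint_left.mp this (Finset.min'_mem _ (hne i)))
      (by rw [h2]; exact Finset.min'_mem _ _)
  have hcard : (Finset.univ : Finset (Fin k)).card ≤ (Finset.Icc 1 (k - 1)).card :=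
    Finset.card_le_card_of_injOn _ (fun i _ => hmin i) (hinj.injOn)
  simp [Nat.card_Icc] at hcard
  omega
end

section
/- Let I₀ and J be positive integers. If H(I₀, J) = I₀·J, then H(2I₀, J) = 2I₀·J; indeed, the union of a family of I₀ pairwise disjoint J-element Golomb rulers contained in {1, ..., I₀J} with the family obtained by adding I₀J to every element of every ruler yields 2I₀ pairwise disjoint J-element Golomb rulers contained in {1, ..., 2I₀J}. -/
lemma golomb_shift (S : Finset ℕ) (k : ℕ) (hS : IsGolomb S) :
    IsGolomb (S.image (· + k)) := by
  intro a ha b hb c hc d hd hab hcd heq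
  simp only [Finset.mem_image] at ha hb hc hd
  obtain ⟨a', ha', rfl⟩ := ha
  obtain ⟨b', hb', rfl⟩ := hb
  obtain ⟨c', hc', rfl⟩ := hc
  obtain ⟨d', hd', rfl⟩ := hd
  have hab' : a' ≠ b' := by intro hh; exact hab (by rw [hh])
  have hcd' : c' ≠ d' := by intro hh; exact hcd (by rw [hh])
  have heq' : (a' : ℤ) - b' = (c' : ℤ) - d' := by push_cast at heq; linarith
  obtain ⟨h1, h2⟩ := hS a' ha' b' hb' c' hc' d' hd' hab' hcd' heq'
  exact ⟨by rw [h1], by rw [h2]⟩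

lemma dgr_lower (I J n : ℕ) (hd : HasDGR I J n) : I * J ≤ n := by
  obtain ⟨f, hf, hdisj⟩ := hd
  have hcard : (Finset.univ.biUnion f).card = I * J := by
    rw [Finset.card_biUnion (fun i _ j _ hij => hdisj i j hij)]
    simp [fun i => (hf i).1, Finset.sum_const, mul_comm]
  have hsub : Finset.univ.biUnion f ⊆ Finset.Icc 1 n := by
    intro x hx
    simp only [Finset.mem_biUnion] at hx
    obtain ⟨i, _, hxi⟩ := hx
    exact (hf i).2.1 hxi
  have := Finset.card_le_card hsub
  simpa [hcard, Nat.card_Icc] using this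

theorem H_double_of_regular (I₀ J : ℕ) (hI : 1 ≤ I₀) (hJ : 1 ≤ J)
    (h : H I₀ J = I₀ * J) : H (2 * I₀) J = 2 * I₀ * J := by
  have hpos : 0 < I₀ * J := Nat.mul_pos hI hJ
  have hne : {n : ℕ | 0 < n ∧ HasDGR I₀ J n}.Nonempty := by
    by_contra hne
    rw [Set.not_nonempty_iff_eq_empty] at hne
    rw [H, hne, Nat.sInf_empty] at h
    omega
  have hmem : (I₀ * J) ∈ {n : ℕ | 0 < n ∧ HasDGR I₀ J n} := by
    rw [H] at h; exact h ▸ Nat.sInf_mem hne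
  obtain ⟨_, f, hf, hdisj⟩ := hmem
  -- build doubled family
  set k := I₀ * J with hk
  have h2k : 2 * I₀ * J = k + k := by rw [hk]; ring
  have hbig : HasDGR (2 * I₀) J (2 * I₀ * J) := by
    refine ⟨fun i => if hi : (i : ℕ) < I₀ then f ⟨i, hi⟩
      else (f ⟨(i : ℕ) - I₀, by omega⟩).image (· + k), ?_, ?_⟩
    · intro i
      by_cases hi : (i : ℕ) < I₀
      · dsimp only; rw [dif_pos hi]
        refine ⟨(hf _).1, ?_, (hf _).2.2⟩
        intro x hx
        have := (hf ⟨i, hi⟩).2.1 hx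
        simp only [Finset.mem_Icc] at this ⊢
        omega
      · dsimp only; rw [dif_neg hi]
        refine ⟨?_, ?_, golomb_shift _ _ (hf _).2.2⟩
        · rw [Finset.card_image_of_injective _ (add_left_injective k)]
          exact (hf _).1
        · intro x hx
          simp only [Finset.mem_image] at hx
          obtain ⟨y, hy, rfl⟩ := hx
          have := (hf _).2.1 hy
          simp only [Finset.mem_Icc] at this ⊢
          omega
    · intro i j hij
      by_cases hi : (i : ℕ) < I₀ <;> by_cases hj : (j : ℕ) < I₀
      · dsimp only; rw [dif_pos hi, dif_pos hj]
        exact hdisj _ _ (by simp only [ne_eq, Fin.mk.injEq]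
                            exact fun hh => hij (Fin.ext hh))
      · dsimp only; rw [dif_pos hi, dif_neg hj]
        rw [Finset.disjoint_left]
        intro x hx hx'
        simp only [Finset.mem_image] at hx'
        obtain ⟨y, hy, rfl⟩ := hx'
        have h1 := (hf ⟨i, hi⟩).2.1 hx
        have h2 := (hf _).2.1 hy
        simp only [Finset.mem_Icc] at h1 h2
        omega
      · dsimp only; rw [dif_neg hi, dif_pos hj]
        rw [Finset.disjoint_right]
        intro x hx hx'
        simp only [Finset.mem_image] at hx'
        obtain ⟨y, hy, rfl⟩ := hx'
        have h1 := (hf ⟨j, hj⟩).2.1 hx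
        have h2 := (hf _).2.1 hy
        simp only [Finset.mem_Icc] at h1 h2
        omega
      · dsimp only; rw [dif_neg hi, dif_neg hj]
        have hd : Disjoint (f ⟨(i : ℕ) - I₀, by omega⟩) (f ⟨(j : ℕ) - I₀, by omega⟩) := by
          apply hdisj
          simp only [ne_eq, Fin.mk.injEq]
          have : (i : ℕ) ≠ (j : ℕ) := fun hh => hij (Fin.ext hh)
          omega
        rw [Finset.disjoint_left] at hd ⊢
        intro x hx hx'
        simp only [Finset.mem_image] at hx hx'
        obtain ⟨y, hy, rfl⟩ := hx
        obtain ⟨z, hz, hzy⟩ := hx'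
        have hzy' : z = y := by omega
        subst hzy'
        exact hd hy hz
  have hm : (2 * I₀ * J) ∈ {n : ℕ | 0 < n ∧ HasDGR (2 * I₀) J n} :=
    ⟨by positivity, hbig⟩
  have hle := Nat.sInf_le hm
  have hsm := Nat.sInf_mem ⟨_, hm⟩
  have hge := dgr_lower _ _ _ hsm.2
  rw [H]
  omega
end
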